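/- Let G be a connected simple graph on [n+1], n ≥ 1, with k_{n+1}(G) minimal among all k_i(G). Let B = B(G) and a = (|B| − k_{n+1}(G) − 1)/(n − 1) for n ≥ 2 (for n = 1 take a = 1). Then 1 ≤ a ≤ k_{n+1}(G). -/

import Mathlib

/-!
Write `|B| = k_v + N`, where `N` counts the connected sets avoiding `v`; the singletons
`{i}`, `i ≠ v`, give `N ≥ n`. For the upper bound, grow a connected set `S ∋ v` by one
adjacent vertex `x` at a time. A connected set avoiding `S` either contains `x`, and is then
recovered from its union with `S`, a connected set through `v`; or it avoids `S ∪ {x}`.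
Each step thus costs at most `k_v`, and the last one, where only `{x}` remains, costs `1`,
so `N ≤ (n - 1) k_v + 1`.
-/

open scoped Classical

/-- The graphical building set of connected induced subgraphs. -/
noncomputable def graphBuildingSet {m : ℕ} (G : SimpleGraph (Fin m)) :
    Finset (Finset (Fin m)) :=
  Finset.univ.filter fun I => (G.induce (I : Set (Fin m))).Connected

/-- `k_i(G)`: the number of connected induced subgraphs of `G` containing `i`. -/
noncomputable def kOf {m : ℕ} (G : SimpleGraph (Fin m)) (i : Fin m) : ℕ :=
  ((graphBuildingSet G).filter fun I => i ∈ I).card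

open Finset SimpleGraph

theorem SimpleGraph.Preconnected.exists_adj_mem_notMem {V : Type*} {G : SimpleGraph V}
    (hG : G.Preconnected) {s : Set V} {u w : V} (hu : u ∈ s) (hw : w ∉ s) :
    ∃ x ∈ s, ∃ y ∉ s, G.Adj x y := by
  obtain ⟨p⟩ := hG u w
  obtain ⟨d, -, hd, hd'⟩ := p.exists_boundary_dart s hu hw
  exact ⟨d.fst, hd, d.snd, hd', d.adj⟩

theorem SimpleGraph.connected_induce_singleton {V : Type*} {G : SimpleGraph V} (x : V) :
    (G.induce {x}).Connected := by
  rw [induce_singleton_eq_top]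
  exact connected_top

variable {m : ℕ} {G : SimpleGraph (Fin m)}

theorem mem_graphBuildingSet {I : Finset (Fin m)} :
    I ∈ graphBuildingSet G ↔ (G.induce (I : Set (Fin m))).Connected := by
  simp [graphBuildingSet]

theorem singleton_mem_graphBuildingSet (x : Fin m) : {x} ∈ graphBuildingSet G := by
  rw [mem_graphBuildingSet, coe_singleton]
  exact connected_induce_singleton x

theorem nonempty_of_mem_graphBuildingSet {I : Finset (Fin m)} (hI : I ∈ graphBuildingSet G) :
    I.Nonempty := by
  obtain ⟨⟨x, hx⟩⟩ := (mem_graphBuildingSet.mp hI).nonempty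
  exact ⟨x, hx⟩

theorem one_le_kOf (v : Fin m) : 1 ≤ kOf G v :=
  card_pos.mpr ⟨{v}, mem_filter.mpr ⟨singleton_mem_graphBuildingSet v, mem_singleton_self v⟩⟩

theorem kOf_eq_card_filter_singleton_subset (v : Fin m) :
    kOf G v = #{I ∈ graphBuildingSet G | {v} ⊆ I} := by
  simp only [kOf, singleton_subset_iff]

theorem card_graphBuildingSet_eq_kOf_add (v : Fin m) :
    #(graphBuildingSet G) = kOf G v + #{I ∈ graphBuildingSet G | Disjoint {v} I} := by
  simp only [kOf, disjoint_singleton_left]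
  exact (card_filter_add_card_filter_not _).symm

theorem card_compl_le_card_filter_disjoint (S : Finset (Fin m)) :
    #Sᶜ ≤ #{I ∈ graphBuildingSet G | Disjoint S I} := by
  rw [← card_map ⟨singleton, singleton_injective⟩]
  refine card_le_card fun I hI => ?_
  obtain ⟨x, hx, rfl⟩ := mem_map.mp hI
  exact mem_filter.mpr ⟨singleton_mem_graphBuildingSet x,
    disjoint_singleton_right.mpr (mem_compl.mp hx)⟩

theorem card_filter_disjoint_le_one {S : Finset (Fin m)} (hS : #Sᶜ ≤ 1) :
    #{I ∈ graphBuildingSet G | Disjoint S I} ≤ 1 := by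
  refine card_le_one.mpr fun I hI J hJ => ?_
  have h_eq_compl : ∀ K ∈ ({I ∈ graphBuildingSet G | Disjoint S I} : Finset _), K = Sᶜ := by
    intro K hK
    obtain ⟨hKB, hKS⟩ := mem_filter.mp hK
    exact eq_of_subset_of_card_le (subset_compl_iff_disjoint_left.mpr hKS)
      (hS.trans (nonempty_of_mem_graphBuildingSet hKB).card_pos)
  rw [h_eq_compl I hI, h_eq_compl J hJ]

theorem card_filter_disjoint_le_add {S : Finset (Fin m)}
    (hS : (G.induce (S : Set (Fin m))).Connected) {x y : Fin m} (hy : y ∈ S) (hxy : G.Adj y x) :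
    #{I ∈ graphBuildingSet G | Disjoint S I} ≤
      #{I ∈ graphBuildingSet G | S ⊆ I} + #{I ∈ graphBuildingSet G | Disjoint (insert x S) I} := by
  set T : Finset (Finset (Fin m)) := {I ∈ graphBuildingSet G | Disjoint S I ∧ x ∈ I}
  have h_split : {I ∈ graphBuildingSet G | Disjoint S I} ⊆
      T ∪ {I ∈ graphBuildingSet G | Disjoint (insert x S) I} := by
    intro I hI
    simp only [T, mem_filter, mem_union, disjoint_insert_left] at hI ⊢
    tauto
  have hT_le : #T ≤ #{I ∈ graphBuildingSet G | S ⊆ I} := by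
    refine card_le_card_of_injOn (· ∪ S) (fun I hI => ?_) (fun I hI J hJ hIJ => ?_)
    · obtain ⟨hIB, -, hxI⟩ := mem_filter.mp hI
      refine mem_filter.mpr ⟨mem_graphBuildingSet.mpr ?_, subset_union_right⟩
      rw [coe_union]
      exact connected_induce_union (mem_graphBuildingSet.mp hIB).preconnected hS.preconnected
        hxI hy hxy.symm
    · have hIS := (mem_filter.mp hI).2.1
      have hJS := (mem_filter.mp hJ).2.1
      rw [← union_sdiff_cancel_right hIS.symm, ← union_sdiff_cancel_right hJS.symm]
      exact congrArg (· \ S) hIJ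
  exact (card_le_card h_split).trans ((card_union_le _ _).trans (by omega))

theorem card_filter_disjoint_le (hG : G.Connected) {S : Finset (Fin m)}
    (hS : (G.induce (S : Set (Fin m))).Connected) :
    #{I ∈ graphBuildingSet G | Disjoint S I} ≤
      (#Sᶜ - 1) * #{I ∈ graphBuildingSet G | S ⊆ I} + 1 := by
  obtain ⟨c, hc⟩ : ∃ c, #Sᶜ = c := ⟨_, rfl⟩
  induction c using Nat.strong_induction_on generalizing S with
  | _ c ih =>
  rcases le_or_gt c 1 with hc1 | hc1
  · exact (card_filter_disjoint_le_one (hc ▸ hc1)).trans (Nat.le_add_left _ _)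
  obtain ⟨⟨u, hu⟩⟩ := hS.nonempty
  obtain ⟨w, hw⟩ : Sᶜ.Nonempty := card_pos.mp (by omega)
  obtain ⟨y, hy, x, hx, hxy⟩ :=
    hG.preconnected.exists_adj_mem_notMem hu (mem_compl.mp hw)
  have hS' : (G.induce ((insert x S : Finset (Fin m)) : Set (Fin m))).Connected := by
    rw [coe_insert, Set.insert_eq]
    exact connected_induce_union (connected_induce_singleton x).preconnected
      hS.preconnected rfl hy hxy.symm
  have hc' : #(insert x S)ᶜ = c - 1 := by
    rw [compl_insert, card_erase_of_mem (mem_compl.mpr hx), hc]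
  have h_mono : #{I ∈ graphBuildingSet G | insert x S ⊆ I} ≤ #{I ∈ graphBuildingSet G | S ⊆ I} :=
    card_le_card (monotone_filter_right _ fun _ _ h => (subset_insert x S).trans h)
  have h_step := card_filter_disjoint_le_add hS hy hxy
  have h_ih := ih (c - 1) (by omega) hS' hc'
  obtain ⟨d, rfl⟩ : ∃ d, c = d + 2 := ⟨c - 2, by omega⟩
  rw [hc, show d + 2 - 1 = d + 1 by omega]
  rw [hc', show d + 2 - 1 - 1 = d by omega] at h_ih
  nlinarith

theorem add_kOf_le_card_graphBuildingSet {n : ℕ} (G : SimpleGraph (Fin (n + 1)))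
    (v : Fin (n + 1)) : n + kOf G v ≤ #(graphBuildingSet G) := by
  have := card_compl_le_card_filter_disjoint (G := G) {v}
  rw [card_compl, card_singleton, Fintype.card_fin, Nat.add_sub_cancel] at this
  rw [card_graphBuildingSet_eq_kOf_add v]
  omega

theorem card_graphBuildingSet_le {n : ℕ} (hn : 1 ≤ n) {G : SimpleGraph (Fin (n + 1))}
    (hG : G.Connected) (v : Fin (n + 1)) : #(graphBuildingSet G) ≤ n * kOf G v + 1 := by
  have := card_filter_disjoint_le hG (S := {v})
    (by rw [coe_singleton]; exact connected_induce_singleton v)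
  rw [card_compl, card_singleton, Fintype.card_fin, Nat.add_sub_cancel,
    ← kOf_eq_card_filter_singleton_subset] at this
  rw [card_graphBuildingSet_eq_kOf_add v]
  obtain ⟨n, rfl⟩ : ∃ n', n = n' + 1 := ⟨n - 1, by omega⟩
  simp only [Nat.add_sub_cancel] at this
  nlinarith

theorem a_between_one_and_k_general {n : ℕ} (hn : 1 ≤ n)
    (G : SimpleGraph (Fin (n + 1))) (hG : G.Connected)
    (a : ℚ)
    (ha : a = if n = 1 then 1 else
      ((graphBuildingSet G).card - (kOf G (Fin.last n)) - 1 : ℚ) / ((n - 1 : ℕ) : ℚ)) :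
    1 ≤ a ∧ a ≤ (kOf G (Fin.last n) : ℚ) := by
  have hk : (1 : ℚ) ≤ kOf G (Fin.last n) := by exact_mod_cast one_le_kOf _
  have hlow : (n + kOf G (Fin.last n) : ℚ) ≤ #(graphBuildingSet G) := by
    exact_mod_cast add_kOf_le_card_graphBuildingSet G (Fin.last n)
  have hup : (#(graphBuildingSet G) : ℚ) ≤ n * kOf G (Fin.last n) + 1 := by
    exact_mod_cast card_graphBuildingSet_le hn hG (Fin.last n)
  split_ifs at ha with h1
  · exact ⟨ha.ge, ha ▸ hk⟩
  have hd : (0 : ℚ) < (n : ℚ) - 1 := by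
    have : (2 : ℚ) ≤ n := by exact_mod_cast (by omega : 2 ≤ n)
    linarith
  rw [ha, Nat.cast_sub hn, Nat.cast_one, le_div_iff₀ hd, div_le_iff₀ hd]
  constructor <;> nlinarith

/-- Let `G` be connected on `[n+1]`, `n ≥ 1`, with `k_{n+1}`
minimal. With `a = (|B| − k_{n+1} − 1)/(n − 1)` for `n ≥ 2` (and `a = 1` for
`n = 1`), we have `1 ≤ a ≤ k_{n+1}`. -/
theorem a_between_one_and_k {n : ℕ} (hn : 1 ≤ n)
    (G : SimpleGraph (Fin (n + 1))) (hG : G.Connected)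
    (hmin : ∀ i : Fin (n + 1), kOf G (Fin.last n) ≤ kOf G i)
    (a : ℚ)
    (ha : a = if n = 1 then 1 else
      ((graphBuildingSet G).card - (kOf G (Fin.last n)) - 1 : ℚ) / ((n - 1 : ℕ) : ℚ)) :
    1 ≤ a ∧ a ≤ (kOf G (Fin.last n) : ℚ) :=
  a_between_one_and_k_general hn G hG a ha
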